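/- Second mixed pentagon relation: S̃₁₂ · S'₂₃ = S'₂₃ · S'₁₃ · S̃₁₂ as matrices on V × V × V, where S̃ := Sᵀ and S' := (S⁻¹)^{t₁}. -/
import Mathlib


open Matrix BigOperators

/-- Matrix on `V × V × V` acting as `T` on the first and second factors. -/
def lift12 {k V : Type*} [Semiring k] [DecidableEq V]
    (T : Matrix (V × V) (V × V) k) : Matrix (V × V × V) (V × V × V) k :=
  Matrix.of fun p q =>
    T (p.1, p.2.1) (q.1, q.2.1) * (if p.2.2 = q.2.2 then 1 else 0)

/-- Matrix on `V × V × V` acting as `T` on the first and third factors. -/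
def lift13 {k V : Type*} [Semiring k] [DecidableEq V]
    (T : Matrix (V × V) (V × V) k) : Matrix (V × V × V) (V × V × V) k :=
  Matrix.of fun p q =>
    T (p.1, p.2.2) (q.1, q.2.2) * (if p.2.1 = q.2.1 then 1 else 0)

/-- Matrix on `V × V × V` acting as `T` on the second and third factors. -/
def lift23 {k V : Type*} [Semiring k] [DecidableEq V]
    (T : Matrix (V × V) (V × V) k) : Matrix (V × V × V) (V × V × V) k :=
  Matrix.of fun p q =>
    T (p.2.1, p.2.2) (q.2.1, q.2.2) * (if p.1 = q.1 then 1 else 0)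

/-- Partial transposition in the first factor: `T^{t₁}_{(a,b),(c,d)} = T_{(c,b),(a,d)}`. -/
def pt1 {k V : Type*} (T : Matrix (V × V) (V × V) k) : Matrix (V × V) (V × V) k :=
  Matrix.of fun p q => T (q.1, p.2) (p.1, q.2)

/-- Partial transposition in the second factor: `T^{t₂}_{(a,b),(c,d)} = T_{(a,d),(c,b)}`. -/
def pt2 {k V : Type*} (T : Matrix (V × V) (V × V) k) : Matrix (V × V) (V × V) k :=
  Matrix.of fun p q => T (p.1, q.2) (q.1, p.2)


section MixedPentagonAux

set_option linter.unusedSectionVars false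

variable {k V : Type*} [CommRing k] [Fintype V] [DecidableEq V]

lemma lift13_mul (A B : Matrix (V × V) (V × V) k) :
    lift13 (A * B) = lift13 A * lift13 B := by
  ext ⟨a, b, c⟩ ⟨a', b', c'⟩
  simp [lift13, Matrix.mul_apply, Fintype.sum_prod_type, mul_ite, ite_mul,
    Finset.mul_sum, Finset.sum_mul]

lemma lift23_mul (A B : Matrix (V × V) (V × V) k) :
    lift23 (A * B) = lift23 A * lift23 B := by
  ext ⟨a, b, c⟩ ⟨a', b', c'⟩
  simp [lift23, Matrix.mul_apply, Fintype.sum_prod_type, mul_ite, ite_mul,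
    Finset.mul_sum, Finset.sum_mul]

lemma lift13_one : lift13 (1 : Matrix (V × V) (V × V) k) = 1 := by
  ext ⟨a, b, c⟩ ⟨a', b', c'⟩
  simp [lift13, Matrix.one_apply, Prod.ext_iff]
  aesop

lemma lift23_one : lift23 (1 : Matrix (V × V) (V × V) k) = 1 := by
  ext ⟨a, b, c⟩ ⟨a', b', c'⟩
  simp [lift23, Matrix.one_apply, Prod.ext_iff]
  aesop

lemma lift12_transpose (T : Matrix (V × V) (V × V) k) :
    (lift12 T)ᵀ = lift12 Tᵀ := by
  ext ⟨a, b, c⟩ ⟨a', b', c'⟩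
  simp [lift12, Matrix.transpose_apply, eq_comm]

lemma lift13_transpose (T : Matrix (V × V) (V × V) k) :
    (lift13 T)ᵀ = lift13 Tᵀ := by
  ext ⟨a, b, c⟩ ⟨a', b', c'⟩
  simp [lift13, Matrix.transpose_apply, eq_comm]

lemma lift23_transpose (T : Matrix (V × V) (V × V) k) :
    (lift23 T)ᵀ = lift23 Tᵀ := by
  ext ⟨a, b, c⟩ ⟨a', b', c'⟩
  simp [lift23, Matrix.transpose_apply, eq_comm]

lemma pt2_transpose (B : Matrix (V × V) (V × V) k) : pt2 Bᵀ = pt1 B := by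
  ext ⟨a, b⟩ ⟨c, d⟩
  simp [pt1, pt2]

/-- Partial transpose of a matrix on `V × V × V` in the third tensor factor. -/
def th3 (M : Matrix (V × V × V) (V × V × V) k) : Matrix (V × V × V) (V × V × V) k :=
  Matrix.of fun p q => M (p.1, p.2.1, q.2.2) (q.1, q.2.1, p.2.2)

lemma th3_lem1 (X Y : Matrix (V × V) (V × V) k) :
    th3 (lift12 X * lift23 Y) = lift12 X * lift23 (pt2 Y) := by
  ext ⟨a, b, c⟩ ⟨a', b', c'⟩
  simp [th3, lift12, lift23, pt2, Matrix.mul_apply, Fintype.sum_prod_type, mul_ite, ite_mul]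

lemma th3_lem2 (Z Y X : Matrix (V × V) (V × V) k) :
    th3 (lift13 Z * (lift23 Y * lift12 X)) = lift23 (pt2 Y) * (lift13 (pt2 Z) * lift12 X) := by
  ext ⟨a, b, c⟩ ⟨a', b', c'⟩
  simp [th3, lift12, lift13, lift23, pt2, Matrix.mul_apply, Fintype.sum_prod_type, mul_ite,
    ite_mul, Finset.mul_sum, Finset.sum_mul]
  conv_rhs => rw [Finset.sum_comm]
  conv_rhs => arg 2; ext x1; rw [Finset.sum_comm]
  conv_rhs => rw [Finset.sum_comm]
  refine Finset.sum_congr rfl fun _ _ => Finset.sum_congr rfl fun _ _ =>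
    Finset.sum_congr rfl fun _ _ => ?_
  ring

end MixedPentagonAux

theorem mixed_pentagon_two
    {k V : Type*} [Field k] [Fintype V] [DecidableEq V]
    (S : Matrix (V × V) (V × V) k)
    (hSinv : IsUnit S) (hSt2inv : IsUnit (pt2 S))
    (hpent : lift12 S * lift13 S * lift23 S = lift23 S * lift12 S) :
    lift12 Sᵀ * lift23 (pt1 S⁻¹) = lift23 (pt1 S⁻¹) * lift13 (pt1 S⁻¹) * lift12 Sᵀ := by
  have hdet : IsUnit S.det := (Matrix.isUnit_iff_isUnit_det S).mp hSinv
  have hSB : S * S⁻¹ = 1 := Matrix.mul_nonsing_inv S hdet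
  have hBS : S⁻¹ * S = 1 := Matrix.nonsing_inv_mul S hdet
  set B := S⁻¹ with hB
  -- transposed pentagon
  have TP : lift23 Sᵀ * (lift13 Sᵀ * lift12 Sᵀ) = lift12 Sᵀ * lift23 Sᵀ := by
    have := congrArg Matrix.transpose hpent
    simpa [Matrix.transpose_mul, lift12_transpose, lift13_transpose, lift23_transpose,
      mul_assoc] using this
  have h23SB : lift23 Sᵀ * lift23 Bᵀ = 1 := by
    rw [← lift23_mul, ← Matrix.transpose_mul, hBS, Matrix.transpose_one, lift23_one]
  have h23BS : lift23 Bᵀ * lift23 Sᵀ = 1 := by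
    rw [← lift23_mul, ← Matrix.transpose_mul, hSB, Matrix.transpose_one, lift23_one]
  have h13BS : lift13 Bᵀ * lift13 Sᵀ = 1 := by
    rw [← lift13_mul, ← Matrix.transpose_mul, hSB, Matrix.transpose_one, lift13_one]
  -- the transposed pentagon, rewritten with inverses
  have step2 : lift12 Sᵀ * lift23 Bᵀ = lift13 Bᵀ * (lift23 Bᵀ * lift12 Sᵀ) := by
    have h1 : lift12 Sᵀ = lift13 Bᵀ * (lift23 Bᵀ * (lift12 Sᵀ * lift23 Sᵀ)) := by
      rw [← TP]
      rw [← mul_assoc (lift23 Bᵀ), h23BS, one_mul, ← mul_assoc, h13BS, one_mul]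
    calc lift12 Sᵀ * lift23 Bᵀ
        = lift13 Bᵀ * (lift23 Bᵀ * (lift12 Sᵀ * lift23 Sᵀ)) * lift23 Bᵀ := by rw [← h1]
      _ = lift13 Bᵀ * (lift23 Bᵀ * lift12 Sᵀ) * (lift23 Sᵀ * lift23 Bᵀ) := by
            simp only [mul_assoc]
      _ = lift13 Bᵀ * (lift23 Bᵀ * lift12 Sᵀ) := by rw [h23SB, mul_one]
  -- apply the partial transpose in the third factor
  have final := congrArg th3 step2
  rw [th3_lem1, th3_lem2] at final
  rw [pt2_transpose] at final
  rw [final, mul_assoc]
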